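/- Let X be a standard Brownian motion, G standard Gaussian, f : ℝ → ℝ with bounded derivative, and P a polynomial with E[G·P(G)] = 0. Set r_t^{(1,m)} = 2^{-m/2}·(1/2)·∑_{j=1}^{⌊2^{m/2}t⌋} φ(j) f'(X_{(j−1)2^{-m/2}})·(X_j^{(m)} − X_{j−1}^{(m)})·(P(X_j^{(m)} − X_{j−1}^{(m)}) − E[P(G)]), where X_t^{(m)} = 2^{m/4} X_{t 2^{-m/2}} and φ is any function bounded by a constant. Then E|r_t^{(1,m)}|² = O(2^{-m/2}) as m → ∞. -/

import Mathlib

/-! Put `h = 2^(-m/2)`. The normalised increments `Y i = (X ((i+1) h) - X (i h)) / √h` are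
independent standard Gaussians, and with `g y = y (P y - E P(G))` the sum is
`(h/2) ∑_{i<N} A i · g (Y i)`, where `A i = φ (i+1) f'(√h (Y 0 + ⋯ + Y (i-1)))` is bounded by `K M`
and depends only on the earlier increments. Since `E g(G) = E[G P(G)] = 0`, independence of
`Y k` from the past makes the summands orthogonal in `L²`, so the second moment is at most
`(h/2)² N (K M)² E g(G)²`, and `N h ≤ t` gives the rate `h`. -/

open MeasureTheory ProbabilityTheory

def IsBrownianMotion {Ω : Type*} [MeasureSpace Ω] (X : ℝ → Ω → ℝ) : Prop :=
  (∀ᵐ ω, X 0 ω = 0) ∧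
  (∀ s t : ℝ, 0 ≤ s → s ≤ t →
    Measure.map (fun ω => X t ω - X s ω) (ℙ : Measure Ω) = gaussianReal 0 (t - s).toNNReal) ∧
  (∀ (n : ℕ) (u : ℕ → ℝ), Monotone u → 0 ≤ u 0 →
    iIndepFun
      (fun i : Fin n => fun ω => X (u (i + 1)) ω - X (u i) ω) (ℙ : Measure Ω))

open Finset Polynomial
open scoped NNReal

lemma integrable_eval_gaussianReal (Q : ℝ[X]) (μ : ℝ) (v : ℝ≥0) :
    Integrable (fun x => Q.eval x) (gaussianReal μ v) := by
  simp_rw [Q.eval_eq_sum_range]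
  exact integrable_finsetSum _ fun i _ =>
    (integrable_pow_of_mem_interior_integrableExpSet (X := id) (by simp) i).const_mul _

lemma memLp_two_eval_gaussianReal (Q : ℝ[X]) (μ : ℝ) (v : ℝ≥0) :
    MemLp (fun x => Q.eval x) 2 (gaussianReal μ v) :=
  (memLp_two_iff_integrable_sq Q.continuous.aestronglyMeasurable).2 <| by
    simpa only [eval_pow] using integrable_eval_gaussianReal (Q ^ (2 : ℕ)) μ v

lemma integral_mul_eval_sub_integral_gaussianReal {P : ℝ[X]} {v : ℝ≥0}
    (hP : ∫ x, x * P.eval x ∂gaussianReal 0 v = 0) :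
    ∫ x, x * (P.eval x - ∫ y, P.eval y ∂gaussianReal 0 v) ∂gaussianReal 0 v = 0 := by
  have hXP : Integrable (fun x => x * P.eval x) (gaussianReal 0 v) :=
    (integrable_eval_gaussianReal (X * P) 0 v).congr (ae_of_all _ fun x => by simp)
  have hX : Integrable (fun x : ℝ => x) (gaussianReal 0 v) := by
    simpa only [eval_X] using integrable_eval_gaussianReal (X : ℝ[X]) 0 v
  simp_rw [mul_sub]
  rw [integral_sub hXP (hX.mul_const _), hP, integral_mul_const, integral_id_gaussianReal,
    zero_mul, sub_zero]

lemma iIndepFun_of_forall_fin {Ω β : Type*} {mΩ : MeasurableSpace Ω} {μ : Measure Ω}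
    {mβ : MeasurableSpace β} {Y : ℕ → Ω → β} (h : ∀ n, iIndepFun (fun i : Fin n => Y i) μ) :
    iIndepFun Y μ := by
  refine iIndepFun_iff_finset.2 fun s => ?_
  obtain ⟨n, hn⟩ : ∃ n, ∀ i ∈ s, i < n :=
    ⟨s.sup id + 1, fun i hi => Nat.lt_succ_of_le (le_sup (f := id) hi)⟩
  exact (h n).precomp (g := fun i : s => ⟨i, hn i i.2⟩)
    fun i j hij => Subtype.ext (congrArg Fin.val hij)

section Orthogonality

variable {Ω : Type*} {mΩ : MeasurableSpace Ω} {μ : Measure Ω}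

lemma integral_sq_sum_eq_sum_integral_sq {ι : Type*} (s : Finset ι) {Z : ι → Ω → ℝ}
    (hZ : ∀ i, MemLp (Z i) 2 μ) (horth : Pairwise fun i j => ∫ ω, Z i ω * Z j ω ∂μ = 0) :
    ∫ ω, (∑ i ∈ s, Z i ω) ^ 2 ∂μ = ∑ i ∈ s, ∫ ω, Z i ω ^ 2 ∂μ := by
  have hint (i j : ι) : Integrable (fun ω => Z i ω * Z j ω) μ := (hZ i).integrable_mul (hZ j)
  simp_rw [sq, sum_mul_sum]
  rw [integral_finsetSum _ fun i _ => integrable_finsetSum _ fun j _ => hint i j]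
  refine sum_congr rfl fun i hi => ?_
  rw [integral_finsetSum _ fun j _ => hint i j]
  exact sum_eq_single_of_mem i hi fun j _ hji => horth hji.symm

lemma integral_mul_eq_zero_of_indep {m₁ m₂ : MeasurableSpace Ω} (hm₁ : m₁ ≤ mΩ) (hm₂ : m₂ ≤ mΩ)
    (hind : Indep m₁ m₂ μ) {W ξ : Ω → ℝ} (hW : Measurable[m₁] W) (hξ : Measurable[m₂] ξ)
    (hξ0 : ∫ ω, ξ ω ∂μ = 0) :
    ∫ ω, W ω * ξ ω ∂μ = 0 := by
  have hWξ : IndepFun W ξ μ := by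
    rw [IndepFun_iff_Indep]
    exact indep_of_indep_of_le hind hW.comap_le hξ.comap_le
  rw [hWξ.integral_fun_mul_eq_mul_integral (hW.mono hm₁ le_rfl).aestronglyMeasurable
    (hξ.mono hm₂ le_rfl).aestronglyMeasurable, hξ0, mul_zero]

variable {β : Type*} {mβ : MeasurableSpace β} {Y : ℕ → Ω → β}

lemma iSup_comap_lt_le (hY : ∀ i, Measurable (Y i)) (k : ℕ) :
    ⨆ l < k, mβ.comap (Y l) ≤ mΩ :=
  iSup₂_le fun l _ => (hY l).comap_le

lemma comap_le_iSup_comap_lt {j k : ℕ} (hjk : j < k) :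
    mβ.comap (Y j) ≤ ⨆ l < k, mβ.comap (Y l) :=
  le_iSup₂ (f := fun l _ => mβ.comap (Y l)) j hjk

lemma ProbabilityTheory.iIndepFun.indep_iSup_comap_lt (hind : iIndepFun Y μ)
    (hY : ∀ i, Measurable (Y i)) (k : ℕ) :
    Indep (⨆ l < k, mβ.comap (Y l)) (mβ.comap (Y k)) μ := by
  simpa using indep_iSup_of_disjoint (fun l => (hY l).comap_le) hind
    (S := {l | l < k}) (T := {k}) (by simp)

lemma measurable_sum_range_iSup_comap_lt [AddCommMonoid β] [MeasurableAdd₂ β] (j : ℕ) :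
    Measurable[⨆ l < j, mβ.comap (Y l)] fun ω => ∑ l ∈ range j, Y l ω :=
  Finset.measurable_sum _ fun l hl =>
    (comap_measurable (Y l)).mono (comap_le_iSup_comap_lt (mem_range.1 hl)) le_rfl

theorem integral_sq_sum_predictable_mul_le (hY : ∀ i, Measurable (Y i)) (hind : iIndepFun Y μ)
    {ν : Measure β} (hlaw : ∀ i, HasLaw (Y i) ν μ) {g : β → ℝ} (hgm : Measurable g)
    (hg : MemLp g 2 ν) (hg0 : ∫ x, g x ∂ν = 0) {A : ℕ → Ω → ℝ} {B : ℝ}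
    (hA : ∀ j, Measurable[⨆ l < j, mβ.comap (Y l)] (A j)) (hAB : ∀ j ω, |A j ω| ≤ B) (N : ℕ) :
    ∫ ω, (∑ j ∈ range N, A j ω * g (Y j ω)) ^ 2 ∂μ ≤ N * (B ^ 2 * ∫ x, g x ^ 2 ∂ν) := by
  have hgY (j : ℕ) : Measurable[mβ.comap (Y j)] fun ω => g (Y j ω) :=
    hgm.comp (comap_measurable (Y j))
  have hgY_memLp (j : ℕ) : MemLp (fun ω => g (Y j ω)) 2 μ :=
    hg.comp_measurePreserving ((hlaw j).measurePreserving (hY j))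
  have hmemLp (j : ℕ) : MemLp (fun ω => A j ω * g (Y j ω)) 2 μ :=
    (hgY_memLp j).mul' (memLp_top_of_bound
      ((hA j).mono (iSup_comap_lt_le hY j) le_rfl).aestronglyMeasurable B (ae_of_all _ (hAB j)))
  have hcross : ∀ j k, j < k → ∫ ω, A j ω * g (Y j ω) * (A k ω * g (Y k ω)) ∂μ = 0 := by
    intro j k hjk
    simp_rw [← mul_assoc]
    refine integral_mul_eq_zero_of_indep (iSup_comap_lt_le hY k) (hY k).comap_le
      (hind.indep_iSup_comap_lt hY k) ?_ (hgY k)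
      (((hlaw k).integral_comp hgm.aestronglyMeasurable).trans hg0)
    exact (((hA j).mono (iSup₂_mono' fun l hl => ⟨l, hl.trans hjk, le_rfl⟩) le_rfl).mul
      ((hgY j).mono (comap_le_iSup_comap_lt hjk) le_rfl)).mul (hA k)
  have horth : Pairwise fun j k => ∫ ω, A j ω * g (Y j ω) * (A k ω * g (Y k ω)) ∂μ = 0 := by
    intro j k hjk
    rcases hjk.lt_or_gt with h | h
    · exact hcross j k h
    · simp_rw [mul_comm (A j _ * _)]
      exact hcross k j h
  have hsq (j : ℕ) : ∫ ω, g (Y j ω) ^ 2 ∂μ = ∫ x, g x ^ 2 ∂ν :=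
    (hlaw j).integral_comp (hgm.pow_const 2).aestronglyMeasurable
  rw [integral_sq_sum_eq_sum_integral_sq _ hmemLp horth]
  calc ∑ j ∈ range N, ∫ ω, (A j ω * g (Y j ω)) ^ 2 ∂μ
      ≤ ∑ j ∈ range N, ∫ ω, B ^ 2 * g (Y j ω) ^ 2 ∂μ := by
        refine sum_le_sum fun j _ => integral_mono (hmemLp j).integrable_sq
          ((hgY_memLp j).integrable_sq.const_mul _) fun ω => ?_
        rw [mul_pow]
        exact mul_le_mul_of_nonneg_right (sq_le_sq' (abs_le.1 (hAB j ω)).1 (abs_le.1 (hAB j ω)).2)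
          (sq_nonneg _)
    _ = N * (B ^ 2 * ∫ x, g x ^ 2 ∂ν) := by
        simp_rw [integral_const_mul, hsq]
        simp

end Orthogonality

namespace IsBrownianMotion

variable {Ω : Type*} [MeasureSpace Ω] {X : ℝ → Ω → ℝ}

lemma hasLaw_sub (hX : IsBrownianMotion X) {s t : ℝ} (hs : 0 ≤ s) (hst : s ≤ t) :
    HasLaw (fun ω => X t ω - X s ω) (gaussianReal 0 (t - s).toNNReal) ℙ where
  aemeasurable := aemeasurable_of_map_neZero (by rw [hX.2.1 s t hs hst]; infer_instance)
  map_eq := hX.2.1 s t hs hst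

lemma exists_std_gaussian_increments (hX : IsBrownianMotion X) {h : ℝ} (hh : 0 < h) :
    ∃ Y : ℕ → Ω → ℝ, (∀ i, Measurable (Y i)) ∧ iIndepFun Y ℙ ∧
      (∀ i, HasLaw (Y i) (gaussianReal 0 1) ℙ) ∧
      ∀ᵐ ω, ∀ i : ℕ, X (i * h) ω = √h * ∑ l ∈ range i, Y l ω := by
  set D : ℕ → Ω → ℝ := fun i ω => X ((i + 1 : ℕ) * h) ω - X (i * h) ω with hD
  have hlawD (i : ℕ) : HasLaw (D i) (gaussianReal 0 h.toNNReal) ℙ := by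
    have := hX.hasLaw_sub (s := i * h) (t := (i + 1 : ℕ) * h) (by positivity) (by gcongr; omega)
    rwa [show ((i + 1 : ℕ) : ℝ) * h - i * h = h by push_cast; ring] at this
  set D' : ℕ → Ω → ℝ := fun i => (hlawD i).aemeasurable.mk (D i)
  have hDD' (i : ℕ) : D i =ᵐ[ℙ] D' i := (hlawD i).aemeasurable.ae_eq_mk
  have hsqrt : √h ≠ 0 := (Real.sqrt_pos.2 hh).ne'
  refine ⟨fun i ω => (√h)⁻¹ * D' i ω,
    fun i => (hlawD i).aemeasurable.measurable_mk.const_mul _, ?_, fun i => ?_, ?_⟩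
  · refine iIndepFun_of_forall_fin fun n => ?_
    have hmono : Monotone fun i : ℕ => (i : ℝ) * h :=
      fun i j hij => mul_le_mul_of_nonneg_right (Nat.cast_le.2 hij) hh.le
    have hind : iIndepFun (fun i : Fin n => D i) ℙ := hX.2.2 n _ hmono (by simp)
    exact (hind.congr fun i : Fin n => hDD' i).comp (fun _ x => (√h)⁻¹ * x)
      fun _ => measurable_const_mul _
  · convert gaussianReal_const_mul ((hlawD i).congr (hDD' i).symm) (√h)⁻¹ using 2
    · simp
    · ext
      simp [Real.coe_toNNReal _ hh.le, inv_pow, Real.sq_sqrt hh.le, hh.ne']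
  · filter_upwards [hX.1, ae_all_iff.2 hDD'] with ω h0 hD' i
    simp_rw [mul_sum, ← mul_assoc, mul_inv_cancel₀ hsqrt, one_mul, ← hD', hD]
    rw [sum_range_sub (fun l : ℕ => X (l * h) ω), Nat.cast_zero, zero_mul, h0, sub_zero]

end IsBrownianMotion

lemma sum_Icc_eq_sum_range_increments {x : ℝ → ℝ} {y : ℕ → ℝ} {c h : ℝ} (hc : c * √h = 1)
    (hx : ∀ i : ℕ, x (i * h) = √h * ∑ l ∈ range i, y l) (F : ℕ → ℝ → ℝ → ℝ) (N : ℕ) :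
    ∑ j ∈ Icc 1 N, F j (x ((j - 1) * h)) (c * (x (j * h) - x ((j - 1) * h))) =
      ∑ i ∈ range N, F (i + 1) (√h * ∑ l ∈ range i, y l) (y i) := by
  induction N with
  | zero => simp
  | succ N ih =>
    rw [sum_Icc_succ_top (by omega), ih, sum_range_succ]
    have hN : ((N + 1 : ℕ) : ℝ) - 1 = N := by push_cast; ring
    rw [hN, hx, hx, sum_range_succ, mul_add, add_sub_cancel_left, ← mul_assoc, hc, one_mul]

lemma rpow_div_four_mul_sqrt_rpow_neg_div_two {b : ℝ} (hb : 0 < b) (s : ℝ) :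
    b ^ (s / 4) * √(b ^ (-s / 2)) = 1 := by
  rw [Real.sqrt_eq_rpow, ← Real.rpow_mul hb.le, ← Real.rpow_add hb]
  ring_nf
  exact Real.rpow_zero b

lemma natFloor_rpow_div_two_mul_mul_rpow_neg_div_two_le {b t : ℝ} (hb : 0 < b) (ht : 0 ≤ t)
    (s : ℝ) : ⌊b ^ (s / 2) * t⌋₊ * b ^ (-s / 2) ≤ t := calc
  ⌊b ^ (s / 2) * t⌋₊ * b ^ (-s / 2) ≤ b ^ (s / 2) * t * b ^ (-s / 2) := by
    gcongr; exact Nat.floor_le (by positivity)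
  _ = t := by
    rw [mul_right_comm, ← Real.rpow_add hb, neg_div, add_neg_cancel, Real.rpow_zero, one_mul]

theorem weighted_rank_two_cross_term_L2_rate_general {Ω : Type*} [MeasureSpace Ω]
    (X : ℝ → Ω → ℝ) (hX : IsBrownianMotion X)
    (f : ℝ → ℝ) (M : ℝ) (hf' : ∀ x, |deriv f x| ≤ M)
    (P : Polynomial ℝ) (hP : ∫ x, x * P.eval x ∂(gaussianReal 0 1) = 0)
    (φ : ℕ → ℝ) (K : ℝ) (hφ : ∀ j, |φ j| ≤ K)
    (t : ℝ) (ht : 0 ≤ t) :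
    ∃ C : ℝ, ∀ m : ℕ, 1 ≤ m →
      (∫ ω,
        |(2 : ℝ) ^ (-(m : ℝ) / 2) * (1 / 2) *
          ∑ j ∈ Finset.Icc 1 ⌊(2 : ℝ) ^ ((m : ℝ) / 2) * t⌋₊,
            φ j * deriv f (X (((j : ℝ) - 1) * (2 : ℝ) ^ (-(m : ℝ) / 2)) ω) *
              ((2 : ℝ) ^ ((m : ℝ) / 4) *
                (X ((j : ℝ) * (2 : ℝ) ^ (-(m : ℝ) / 2)) ω -
                  X (((j : ℝ) - 1) * (2 : ℝ) ^ (-(m : ℝ) / 2)) ω)) *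
              (P.eval ((2 : ℝ) ^ ((m : ℝ) / 4) *
                  (X ((j : ℝ) * (2 : ℝ) ^ (-(m : ℝ) / 2)) ω -
                    X (((j : ℝ) - 1) * (2 : ℝ) ^ (-(m : ℝ) / 2)) ω)) -
                ∫ y, P.eval y ∂(gaussianReal 0 1))| ^ 2 ∂ℙ)
        ≤ C * (2 : ℝ) ^ (-(m : ℝ) / 2) := by
  set g : ℝ → ℝ := fun x => x * (P.eval x - ∫ y, P.eval y ∂gaussianReal 0 1)
  set V := ∫ x, g x ^ 2 ∂gaussianReal 0 1
  refine ⟨t * ((K * M) ^ 2 * V) / 4, fun m _ => ?_⟩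
  set h : ℝ := (2 : ℝ) ^ (-(m : ℝ) / 2)
  set N := ⌊(2 : ℝ) ^ ((m : ℝ) / 2) * t⌋₊
  have hNh : N * h ≤ t := natFloor_rpow_div_two_mul_mul_rpow_neg_div_two_le two_pos ht _
  obtain ⟨Y, hYm, hYind, hYlaw, hXY⟩ := hX.exists_std_gaussian_increments (h := h) (by positivity)
  set A : ℕ → Ω → ℝ := fun i ω => φ (i + 1) * deriv f (√h * ∑ l ∈ range i, Y l ω)
  have hA (j : ℕ) : Measurable[⨆ l < j, MeasurableSpace.comap (Y l) inferInstance] (A j) :=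
    ((measurable_deriv f).comp ((measurable_sum_range_iSup_comap_lt j).const_mul _)).const_mul _
  have hAB (j : ℕ) (ω : Ω) : |A j ω| ≤ K * M := by
    rw [abs_mul]
    exact mul_le_mul (hφ _) (hf' _) (abs_nonneg _) ((abs_nonneg _).trans (hφ 0))
  calc _ = ∫ ω, (h * (1 / 2)) ^ 2 * (∑ i ∈ range N, A i ω * g (Y i ω)) ^ 2 ∂ℙ := by
        refine integral_congr_ae (hXY.mono fun ω hω => ?_)
        dsimp only
        rw [sum_Icc_eq_sum_range_increments (x := fun s => X s ω) (h := h)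
          (rpow_div_four_mul_sqrt_rpow_neg_div_two two_pos _) hω
          (fun j u v => φ j * deriv f u * v * (P.eval v - ∫ y, P.eval y ∂gaussianReal 0 1)) N,
          sq_abs, mul_pow]
        simp only [A, g, mul_assoc]
    _ = (h * (1 / 2)) ^ 2 * ∫ ω, (∑ i ∈ range N, A i ω * g (Y i ω)) ^ 2 ∂ℙ :=
        integral_const_mul _ _
    _ ≤ (h * (1 / 2)) ^ 2 * (N * ((K * M) ^ 2 * V)) := by
        gcongr
        refine integral_sq_sum_predictable_mul_le hYm hYind hYlaw (by fun_prop) ?_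
          (integral_mul_eval_sub_integral_gaussianReal hP) hA hAB N
        exact (memLp_two_eval_gaussianReal
          (Polynomial.X * (P - C (∫ y, P.eval y ∂gaussianReal 0 1))) 0 1).ae_eq
          (ae_of_all _ fun x => by simp)
    _ = N * h * (h * ((K * M) ^ 2 * V) / 4) := by ring
    _ ≤ t * (h * ((K * M) ^ 2 * V) / 4) := by gcongr
    _ = t * ((K * M) ^ 2 * V) / 4 * h := by ring

theorem weighted_rank_two_cross_term_L2_rate {Ω : Type*} [MeasureSpace Ω]
    [IsProbabilityMeasure (ℙ : Measure Ω)]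
    (X : ℝ → Ω → ℝ) (hX : IsBrownianMotion X)
    (f : ℝ → ℝ) (hf : Differentiable ℝ f) (M : ℝ) (hf' : ∀ x, |deriv f x| ≤ M)
    (P : Polynomial ℝ) (hP : ∫ x, x * P.eval x ∂(gaussianReal 0 1) = 0)
    (φ : ℕ → ℝ) (K : ℝ) (hφ : ∀ j, |φ j| ≤ K)
    (t : ℝ) (ht : 0 ≤ t) :
    ∃ C : ℝ, ∀ m : ℕ, 1 ≤ m →
      (∫ ω,
        |(2 : ℝ) ^ (-(m : ℝ) / 2) * (1 / 2) *
          ∑ j ∈ Finset.Icc 1 ⌊(2 : ℝ) ^ ((m : ℝ) / 2) * t⌋₊,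
            φ j * deriv f (X (((j : ℝ) - 1) * (2 : ℝ) ^ (-(m : ℝ) / 2)) ω) *
              ((2 : ℝ) ^ ((m : ℝ) / 4) *
                (X ((j : ℝ) * (2 : ℝ) ^ (-(m : ℝ) / 2)) ω -
                  X (((j : ℝ) - 1) * (2 : ℝ) ^ (-(m : ℝ) / 2)) ω)) *
              (P.eval ((2 : ℝ) ^ ((m : ℝ) / 4) *
                  (X ((j : ℝ) * (2 : ℝ) ^ (-(m : ℝ) / 2)) ω -
                    X (((j : ℝ) - 1) * (2 : ℝ) ^ (-(m : ℝ) / 2)) ω)) -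
                ∫ y, P.eval y ∂(gaussianReal 0 1))| ^ 2 ∂ℙ)
        ≤ C * (2 : ℝ) ^ (-(m : ℝ) / 2) :=
  weighted_rank_two_cross_term_L2_rate_general X hX f M hf' P hP φ K hφ t ht
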